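/- arXiv:math/0110176 — 3 statements merged into one kernel-verified Lean document; each statement's English description precedes it below -/
import Mathlib

section
/- A generalized Baumslag–Solitar group G that is not isomorphic to ℤ is not a free group. -/
open SimpleGraph

section Defs

variable {G V : Type} [Group G]

/-- The action `ρ` preserves adjacency of the graph `X`. -/
def PreservesAdj (X : SimpleGraph V) (ρ : G →* Equiv.Perm V) : Prop :=
  ∀ (g : G) (u v : V), X.Adj u v → X.Adj (ρ g u) (ρ g v)

/-- The action is without inversions: no element swaps the endpoints of an edge. -/
def NoInversions (X : SimpleGraph V) (ρ : G →* Equiv.Perm V) : Prop :=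
  ∀ (g : G) (u v : V), X.Adj u v → ¬(ρ g u = v ∧ ρ g v = u)

/-- `X` together with `ρ` is a `G`-tree: a tree with a `G`-action by graph
automorphisms, without inversions. -/
def IsGTree (X : SimpleGraph V) (ρ : G →* Equiv.Perm V) : Prop :=
  X.IsTree ∧ PreservesAdj X ρ ∧ NoInversions X ρ

/-- The stabilizer of a vertex. -/
def vStab (ρ : G →* Equiv.Perm V) (v : V) : Subgroup G :=
  (MulAction.stabilizer (Equiv.Perm V) v).comap ρ

/-- The stabilizer of an edge (for an action without inversions this is the
intersection of the stabilizers of the two endpoints). -/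
def eStab (ρ : G →* Equiv.Perm V) (u v : V) : Subgroup G :=
  vStab ρ u ⊓ vStab ρ v

/-- An element is elliptic if it fixes a vertex; it is hyperbolic otherwise. -/
def Elliptic (ρ : G →* Equiv.Perm V) (γ : G) : Prop := ∃ v : V, ρ γ v = v

/-- A (bi-infinite) line in a graph. -/
def IsLine (X : SimpleGraph V) (L : Set V) : Prop :=
  ∃ f : ℤ → V, Function.Injective f ∧ (∀ n : ℤ, X.Adj (f n) (f (n + 1))) ∧ L = Set.range f

/-- A set of vertices invariant under the element `γ`. -/
def InvariantSet (ρ : G →* Equiv.Perm V) (γ : G) (L : Set V) : Prop :=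
  ⇑(ρ γ) '' L = L

/-- An axis for `γ` : a `γ`-invariant line. (A hyperbolic element has a unique one.) -/
def IsAxis (X : SimpleGraph V) (ρ : G →* Equiv.Perm V) (γ : G) (L : Set V) : Prop :=
  IsLine X L ∧ InvariantSet ρ γ L

/-- A subgroup is infinite cyclic. -/
def IsInfCyclic {G : Type} [Group G] (H : Subgroup G) : Prop := IsCyclic H ∧ Infinite H

/-- A generalized Baumslag–Solitar tree: a `G`-tree all of whose vertex and edge
stabilizers are infinite cyclic. -/
def IsGBSTree (X : SimpleGraph V) (ρ : G →* Equiv.Perm V) : Prop :=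
  IsGTree X ρ ∧ (∀ v : V, IsInfCyclic (vStab ρ v)) ∧
    (∀ u v : V, X.Adj u v → IsInfCyclic (eStab ρ u v))

/-- Two group elements are commensurable: some nonzero powers of them coincide. -/
def CommElts (γ δ : G) : Prop := ∃ m n : ℤ, m ≠ 0 ∧ n ≠ 0 ∧ γ ^ m = δ ^ n

/-- A generalized Baumslag–Solitar group: a group admitting a GBS tree. -/
def IsGBSGroup (G : Type) [Group G] : Prop :=
  ∃ (V : Type) (X : SimpleGraph V) (ρ : G →* Equiv.Perm V), IsGBSTree X ρ

/-- A group is free: isomorphic to a free group on some set. -/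
def IsFreeGrp (G : Type) [Group G] : Prop := ∃ ι : Type, Nonempty (G ≃* FreeGroup ι)

/-- The orbit of the edge `{a, b}` under the action. -/
def EdgeOrbit (ρ : G →* Equiv.Perm V) (a b : V) : Set (Sym2 V) :=
  {e | ∃ g : G, e = s(ρ g a, ρ g b)}

/-- A one-edge splitting of `G` over `C`: a `G`-tree with a single orbit of edges,
no global fixed vertex, and an edge with stabilizer `C` (this is the Bass–Serre
tree of a nontrivial decomposition `A ∗_C B` or `A ∗_C`). -/
def OneEdgeSplitting (X : SimpleGraph V) (ρ : G →* Equiv.Perm V) (u v : V)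
    (C : Subgroup G) : Prop :=
  IsGTree X ρ ∧ X.Adj u v ∧ eStab ρ u v = C ∧
  (¬ ∃ w : V, ∀ g : G, ρ g w = w) ∧
  (∀ u' v' : V, X.Adj u' v' → ∃ g : G, (ρ g u = u' ∧ ρ g v = v') ∨ (ρ g u = v' ∧ ρ g v = u'))

/-- `G` splits over the subgroup `C`. -/
def SplitsOver (G : Type) [Group G] (C : Subgroup G) : Prop :=
  ∃ (W : Type) (T : SimpleGraph W) (σ : G →* Equiv.Perm W) (u v : W),
    OneEdgeSplitting T σ u v C

/-- Cayley graph of a group with respect to a set of generators. -/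
def cayley (G : Type) [Group G] (S : Set G) : SimpleGraph G :=
  SimpleGraph.fromRel (fun a b => a⁻¹ * b ∈ S)

end Defs

/-!
A subgroup of a free group is free (Nielsen–Schreier), so in a free group commuting elements
generate a cyclic subgroup, and elements with a common nontrivial power commute (their images in
the rational abelianization of the subgroup they generate are proportional). In a GBS tree any two
nontrivial elliptic elements are commensurable, since vertex and edge stabilizers are infinite
cyclic and the tree is connected. If `G` were free, the nontrivial elliptic elements would
therefore generate a nontrivial normal cyclic subgroup `⟨d⟩`. Conjugation acts on it by
`d ↦ d ^ (± 1)`, so every square centralizes `d`; for two distinct free generators `x`, `y` this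
makes `x ^ 2` and `y ^ 2` commensurable, which is impossible. Hence `G` has one generator, `G ≅ ℤ`.
-/

open Subgroup

section Commensurable

variable {G : Type} [Group G] {a b c : G}

theorem CommElts.symm (h : CommElts a b) : CommElts b a :=
  let ⟨m, n, hm, hn, h⟩ := h
  ⟨n, m, hn, hm, h.symm⟩

theorem CommElts.trans (h₁ : CommElts a b) (h₂ : CommElts b c) : CommElts a c := by
  obtain ⟨m, n, hm, hn, hab⟩ := h₁
  obtain ⟨p, q, hp, hq, hbc⟩ := h₂
  refine ⟨m * p, q * n, mul_ne_zero hm hp, mul_ne_zero hq hn, ?_⟩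
  rw [zpow_mul, hab, ← zpow_mul, mul_comm n p, zpow_mul, hbc, ← zpow_mul, mul_comm q n]

theorem commElts_of_mem_of_isCyclic {H : Subgroup G} [IsCyclic H] (ha : a ∈ H) (hb : b ∈ H)
    (ha1 : a ≠ 1) (hb1 : b ≠ 1) : CommElts a b := by
  obtain ⟨g, rfl⟩ := (H.isCyclic_iff_exists_zpowers_eq_top).mp ‹_›
  obtain ⟨i, rfl⟩ := mem_zpowers_iff.mp ha
  obtain ⟨j, rfl⟩ := mem_zpowers_iff.mp hb
  refine ⟨j, i, ?_, ?_, by rw [← zpow_mul, ← zpow_mul, mul_comm]⟩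
  · rintro rfl; simp at hb1
  · rintro rfl; simp at ha1

end Commensurable

theorem commute_sq_of_conj_mem_zpowers {G : Type*} [Group G] [IsMulTorsionFree G] {d g : G}
    (hd : d ≠ 1) (h₁ : g * d * g⁻¹ ∈ zpowers d) (h₂ : g⁻¹ * d * g ∈ zpowers d) :
    Commute (g ^ 2) d := by
  obtain ⟨k, hk⟩ := mem_zpowers_iff.mp h₁
  obtain ⟨l, hl⟩ := mem_zpowers_iff.mp h₂
  have hlk : d ^ (l * k) = d :=
    calc d ^ (l * k) = (g⁻¹ * d * g) ^ k := by rw [zpow_mul, hl]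
      _ = g⁻¹ * d ^ k * g := by simpa using conj_zpow (a := g⁻¹) (b := d) (i := k)
      _ = d := by rw [hk]; group
  have hkl : k * l = 1 := by
    rw [mul_comm, ← sub_eq_zero, ← IsMulTorsionFree.zpow_eq_one_iff_right hd, zpow_sub_one, hlk,
      mul_inv_cancel]
  have hkk : k * k = 1 := by
    rcases Int.eq_one_or_neg_one_of_mul_eq_one hkl with rfl | rfl <;> rfl
  have hconj : g ^ 2 * d * (g ^ 2)⁻¹ = d :=
    calc g ^ 2 * d * (g ^ 2)⁻¹ = g * (g * d * g⁻¹) * g⁻¹ := by rw [sq]; group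
      _ = g * d ^ k * g⁻¹ := by rw [hk]
      _ = (g * d * g⁻¹) ^ k := conj_zpow.symm
      _ = d := by rw [← hk, ← zpow_mul, hkk, zpow_one]
  exact mul_inv_eq_iff_eq_mul.mp hconj

theorem Subgroup.normal_closure_of_conj_mem {G : Type*} [Group G] {s : Set G}
    (h : ∀ g, ∀ x ∈ s, g * x * g⁻¹ ∈ s) : (closure s).Normal := by
  refine ⟨fun x hx g => ?_⟩
  have : MulAut.conj g x ∈ (closure s).map (MulAut.conj g).toMonoidHom := mem_map_of_mem _ hx
  rw [MonoidHom.map_closure] at this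
  exact closure_mono (by rintro _ ⟨y, hy, rfl⟩; exact h g y hy) this

namespace IsFreeGroup

section

variable {F : Type*} [Group F] [IsFreeGroup F]

instance : IsMulTorsionFree F :=
  (toFreeGroup F).injective.isMulTorsionFree (toFreeGroup F).toMonoidHom

theorem subsingleton_of_isEmpty_generators [IsEmpty (Generators F)] : Subsingleton F :=
  have h : MonoidHom.id F = 1 := ext_hom isEmptyElim
  ⟨fun x y => (DFunLike.congr_fun h x).trans (DFunLike.congr_fun h y).symm⟩

theorem isCyclic_of_subsingleton_generators [Subsingleton (Generators F)] : IsCyclic F := by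
  cases isEmpty_or_nonempty (Generators F)
  · have := subsingleton_of_isEmpty_generators (F := F)
    infer_instance
  · have : Unique (Generators F) := uniqueOfSubsingleton (Classical.arbitrary _)
    exact (toFreeGroup F).isCyclic.mpr inferInstance

theorem nonempty_mulEquiv_int [Nontrivial F] [Subsingleton (Generators F)] :
    Nonempty (F ≃* Multiplicative ℤ) := by
  cases isEmpty_or_nonempty (Generators F)
  · have := subsingleton_of_isEmpty_generators (F := F)
    exact (not_nontrivial F ‹_›).elim
  · have : Unique (Generators F) := uniqueOfSubsingleton (Classical.arbitrary _)
    exact ⟨(toFreeGroup F).trans FreeGroup.mulEquivIntOfUnique⟩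

theorem subsingleton_generators_of_isMulCommutative [IsMulCommutative F] :
    Subsingleton (Generators F) := by
  classical
  refine ⟨fun i j => by_contra fun hij => ?_⟩
  let f : F →* Equiv.Perm (Fin 3) :=
    lift fun k => if k = i then Equiv.swap 0 1 else if k = j then Equiv.swap 1 2 else 1
  have := congrArg f (IsMulCommutative.is_comm.comm (of i) (of j))
  simp only [map_mul, f, lift_of, if_pos, if_neg (Ne.symm hij)] at this
  revert this
  decide

theorem isCyclic_closure {k : Set F} (hk : ∀ x ∈ k, ∀ y ∈ k, x * y = y * x) :
    IsCyclic (closure k) :=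
  have := isMulCommutative_closure hk
  have := subsingleton_generators_of_isMulCommutative (F := closure k)
  isCyclic_of_subsingleton_generators

noncomputable def ratAbelianization : F →* Multiplicative (Generators F →₀ ℚ) :=
  lift fun i => .ofAdd (Finsupp.single i 1)

@[simp]
theorem toAdd_ratAbelianization_of (i : Generators F) :
    (ratAbelianization (of i)).toAdd = Finsupp.single i 1 := by
  simp [ratAbelianization]

theorem eq_zero_of_zpow_of_eq_zpow_of {i j : Generators F} (hij : i ≠ j) {m n : ℤ}
    (h : of i ^ m = of j ^ n) : m = 0 := by
  have := congrArg (fun z => (ratAbelianization z).toAdd i) h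
  simpa [Finsupp.single_apply, Ne.symm hij] using this

theorem subsingleton_generators_of_forall_mem_span (v : Generators F →₀ ℚ)
    (h : ∀ z : F, (ratAbelianization z).toAdd ∈ Submodule.span ℚ {v}) :
    Subsingleton (Generators F) := by
  refine ⟨fun i j => by_contra fun hij => ?_⟩
  obtain ⟨a, ha⟩ := Submodule.mem_span_singleton.mp (h (of i))
  obtain ⟨b, hb⟩ := Submodule.mem_span_singleton.mp (h (of j))
  have hij' : b • Finsupp.single i (1 : ℚ) = a • Finsupp.single j 1 := by
    rw [toAdd_ratAbelianization_of] at ha hb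
    rw [← ha, ← hb, smul_comm]
  have hb0 : b = 0 := by
    simpa [Finsupp.single_apply, hij] using congrArg (· i) hij'
  rw [hb0, zero_smul, toAdd_ratAbelianization_of] at hb
  exact one_ne_zero (Finsupp.single_eq_zero.mp hb.symm)

theorem commute_of_zpow_eq_zpow {x y : F} {m n : ℤ} (hn : n ≠ 0) (h : x ^ m = y ^ n) :
    Commute x y := by
  -- The images of `x` and `y` in the ℚ-abelianization of `⟨x, y⟩` are proportional, so that
  -- abelianization is at most a line and `⟨x, y⟩`, being free, has at most one generator.
  let K := closure ({x, y} : Set F)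
  let X : K := ⟨x, subset_closure (by simp)⟩
  let Y : K := ⟨y, subset_closure (by simp)⟩
  have hY : (ratAbelianization Y).toAdd ∈ Submodule.span ℚ {(ratAbelianization X).toAdd} := by
    have hXY := congrArg (fun z => (ratAbelianization z).toAdd) (Subtype.ext h : X ^ m = Y ^ n)
    simp only [map_zpow, toAdd_zpow, ← Int.cast_smul_eq_zsmul ℚ] at hXY
    refine Submodule.mem_span_singleton.mpr ⟨(n : ℚ)⁻¹ * m, ?_⟩
    rw [mul_smul, hXY, inv_smul_smul₀ (by exact_mod_cast hn)]
  have : Subsingleton (Generators K) :=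
    subsingleton_generators_of_forall_mem_span _ fun ⟨z, hz⟩ => by
    induction hz using closure_induction with
    | mem z hz =>
      rcases hz with rfl | rfl
      · exact Submodule.mem_span_singleton_self _
      · exact hY
    | one =>
      change (ratAbelianization (1 : K)).toAdd ∈ _
      simp
    | mul a b ha hb iha ihb =>
      change (ratAbelianization ((⟨a, ha⟩ : K) * ⟨b, hb⟩)).toAdd ∈ _
      rw [map_mul, toAdd_mul]
      exact add_mem iha ihb
    | inv a ha iha =>
      change (ratAbelianization (⟨a, ha⟩ : K)⁻¹).toAdd ∈ _
      rw [map_inv, toAdd_inv]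
      exact neg_mem iha
  have := isCyclic_of_subsingleton_generators (F := K)
  exact congrArg Subtype.val (IsCyclic.commGroup.mul_comm X Y)

end

variable {F : Type} [Group F] [IsFreeGroup F]

theorem commute_of_commElts {x y : F} (h : CommElts x y) : Commute x y :=
  let ⟨_, _, _, hn, h⟩ := h
  commute_of_zpow_eq_zpow hn h

theorem commElts_of_commute {x y : F} (h : Commute x y) (hx : x ≠ 1) (hy : y ≠ 1) :
    CommElts x y := by
  have := isCyclic_closure (k := {x, y}) (by
    rintro a (rfl | rfl) b (rfl | rfl) <;> first | rfl | exact h.eq | exact h.eq.symm)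
  exact commElts_of_mem_of_isCyclic (H := closure {x, y})
    (subset_closure (by simp)) (subset_closure (by simp)) hx hy

theorem subsingleton_generators_of_normal_isCyclic (N : Subgroup F) [N.Normal] [IsCyclic N]
    (hN : N ≠ ⊥) : Subsingleton (Generators F) := by
  obtain ⟨d, rfl⟩ := (N.isCyclic_iff_exists_zpowers_eq_top).mp ‹_›
  have hd : d ≠ 1 := by rintro rfl; simp at hN
  -- conjugation induces an automorphism `d ↦ d ^ (± 1)` of `⟨d⟩`
  have hsq (g : F) : Commute (g ^ 2) d :=
    commute_sq_of_conj_mem_zpowers hd (‹Normal _›.conj_mem _ (mem_zpowers d) g)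
      (by simpa using ‹Normal _›.conj_mem _ (mem_zpowers d) g⁻¹)
  refine ⟨fun i j => by_contra fun hij => ?_⟩
  have hsq_ne_one {k l : Generators F} (hkl : k ≠ l) : of k ^ 2 ≠ 1 := fun h =>
    two_ne_zero (eq_zero_of_zpow_of_eq_zpow_of hkl (m := 2) (n := 0) (by simpa using h))
  obtain ⟨m, n, hm, -, h⟩ := (commElts_of_commute (hsq (of i)) (hsq_ne_one hij) hd).trans
    (commElts_of_commute (hsq (of j)) (hsq_ne_one (Ne.symm hij)) hd).symm
  exact mul_ne_zero two_ne_zero hm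
    (eq_zero_of_zpow_of_eq_zpow_of hij (n := 2 * n) (by simpa [zpow_mul] using h))

end IsFreeGroup

section GBSTree

variable {G V : Type} [Group G] {X : SimpleGraph V} {ρ : G →* Equiv.Perm V}

theorem Elliptic.conj {γ : G} (h : Elliptic ρ γ) (g : G) : Elliptic ρ (g * γ * g⁻¹) :=
  let ⟨v, hv⟩ := h
  ⟨ρ g v, by simp [hv]⟩

theorem IsGBSTree.commElts_of_walk (hX : IsGBSTree X ρ) {u w : V} (p : X.Walk u w) {a b : G}
    (ha : a ∈ vStab ρ u) (hb : b ∈ vStab ρ w) (ha1 : a ≠ 1) (hb1 : b ≠ 1) : CommElts a b := by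
  induction p generalizing a with
  | @nil v =>
    have := (hX.2.1 v).1
    exact commElts_of_mem_of_isCyclic ha hb ha1 hb1
  | @cons u x w hux p ih =>
    have := (hX.2.1 u).1
    have := (hX.2.2 u x hux).2
    obtain ⟨c, hc, hc1⟩ := (nontrivial_iff_exists_ne_one (eStab ρ u x)).mp inferInstance
    exact (commElts_of_mem_of_isCyclic ha (mem_inf.mp hc).1 ha1 hc1).trans
      (ih (mem_inf.mp hc).2 hb hc1)

theorem IsGBSTree.commElts_of_elliptic (hX : IsGBSTree X ρ) {a b : G} (ha : Elliptic ρ a)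
    (hb : Elliptic ρ b) (ha1 : a ≠ 1) (hb1 : b ≠ 1) : CommElts a b :=
  let ⟨u, hu⟩ := ha
  let ⟨w, hw⟩ := hb
  hX.commElts_of_walk (hX.1.1.connected.preconnected u w).some hu hw ha1 hb1

theorem IsGBSTree.exists_elliptic_ne_one (hX : IsGBSTree X ρ) :
    ∃ a : G, a ≠ 1 ∧ Elliptic ρ a := by
  obtain ⟨v⟩ := hX.1.1.connected.nonempty
  have := (hX.2.1 v).2
  obtain ⟨a, ha, ha1⟩ := (nontrivial_iff_exists_ne_one (vStab ρ v)).mp inferInstance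
  exact ⟨a, ha1, v, ha⟩

end GBSTree

/-- A generalized Baumslag–Solitar group not isomorphic to `ℤ`
is not a free group. -/
theorem gbs_not_free {G : Type} [Group G] (hG : IsGBSGroup G)
    (hZ : ¬ Nonempty (G ≃* Multiplicative ℤ)) :
    ¬ IsFreeGrp G := by
  rintro ⟨ι, ⟨φ⟩⟩
  have : IsFreeGroup G := .ofMulEquiv φ.symm
  obtain ⟨V, X, ρ, hX⟩ := hG
  obtain ⟨a, ha1, ha⟩ := hX.exists_elliptic_ne_one
  let E : Set G := {z | z ≠ 1 ∧ Elliptic ρ z}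
  have : (closure E).Normal := normal_closure_of_conj_mem fun g z hz =>
    ⟨conj_eq_one_iff.not.mpr hz.1, hz.2.conj g⟩
  have : IsCyclic (closure E) := IsFreeGroup.isCyclic_closure fun x hx y hy =>
    (IsFreeGroup.commute_of_commElts (hX.commElts_of_elliptic hx.2 hy.2 hx.1 hy.1)).eq
  have : Subsingleton (IsFreeGroup.Generators G) :=
    IsFreeGroup.subsingleton_generators_of_normal_isCyclic (closure E)
      ((ne_bot_iff_exists_ne_one).mpr ⟨⟨a, subset_closure ⟨ha1, ha⟩⟩, by simpa using ha1⟩)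
  have : Nontrivial G := ⟨⟨a, 1, ha1⟩⟩
  exact hZ IsFreeGroup.nonempty_mulEquiv_int
end

section
/- Let X be a cocompact generalized Baumslag–Solitar tree with group G such that every edge stabilizer is a proper subgroup of each of its two neighboring vertex stabilizers. Then X is unfolded: for every edge e of X, the one-edge splitting of G obtained by collapsing the components of X minus the orbit of e admits no nontrivial fold onto it. -/
open SimpleGraph

/-- `T` has a single orbit of edges under the action `σ`. -/
def OneEdgeOrbit {G W : Type} [Group G] (T : SimpleGraph W) (σ : G →* Equiv.Perm W) : Prop :=
  ∃ u v : W, T.Adj u v ∧ ∀ x y : W, T.Adj x y →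
    ∃ g : G, (σ g u = x ∧ σ g v = y) ∨ (σ g u = y ∧ σ g v = x)

/-- `q : V → W` is the equivariant quotient map collapsing each connected component
of `X − G⬝{a,b}` to a vertex; the resulting tree `T` is the Bass–Serre tree of the
one-edge splitting of `G` associated to the edge `{a, b}`. -/
def IsCollapseMap {G V W : Type} [Group G] (X : SimpleGraph V) (ρ : G →* Equiv.Perm V)
    (a b : V) (T : SimpleGraph W) (σ : G →* Equiv.Perm W) (q : V → W) : Prop :=
  (∀ (g : G) (x : V), q (ρ g x) = σ g (q x)) ∧ Function.Surjective q ∧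
  T.Adj (q a) (q b) ∧
  (∀ x y : V, q x = q y ↔ ∃ p : X.Walk x y, ∀ e ∈ p.edges, e ∉ EdgeOrbit ρ a b) ∧
  (∀ u' v' : W, T.Adj u' v' →
    ∃ g : G, (σ g (q a) = u' ∧ σ g (q b) = v') ∨ (σ g (q a) = v' ∧ σ g (q b) = u'))

/-- `f : W' → W` is a nontrivial fold of `G`-trees: an equivariant surjective graph
morphism identifying two distinct edges with a common initial vertex. -/
def NontrivialFoldOnto {G W' W : Type} [Group G]
    (T' : SimpleGraph W') (σ' : G →* Equiv.Perm W')
    (T : SimpleGraph W) (σ : G →* Equiv.Perm W) (f : W' → W) : Prop :=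
  (∀ (g : G) (x : W'), f (σ' g x) = σ g (f x)) ∧ Function.Surjective f ∧
  (∀ x y : W', T'.Adj x y → T.Adj (f x) (f y)) ∧
  ∃ x y y' : W', T'.Adj x y ∧ T'.Adj x y' ∧ y ≠ y' ∧ f y = f y'


/-!
Let `f : T' → T` fold the edges `x y` and `x y'` of `T'`. As `T'` has one edge orbit, some `g`
maps `x y` to `x y'`; since `T` has no inversions, `g` fixes `x` and the edge `f(x y)`, yet moves
`y`. The edge `f(x y)` is the image of an edge `u v` of `X`, and collapsing does not enlarge edge
stabilizers, so `g ∈ G_u ∩ G_v`. By Serre's lemma (a tree automorphism with an elliptic nonzero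
power is elliptic: it preserves the finite subtree spanned by an orbit, and stripping leaves shows
that an automorphism of a finite tree fixes a vertex or inverts an edge), the cyclic groups `G_u`
and `G_v` fix vertices `p_u`, `p_v` of `T'`, so `G_u ∩ G_v` fixes the path `[p_u, p_v]`. Neither of
`G_u`, `G_v` contains the other, so the image of `[p_u, p_v]` in `T` crosses `f(x y)`; the edge of
`[p_u, p_v]` doing so is a translate of `x y` by an element stabilizing `f(x y)`, hence by an
element of `G_u ∩ G_v`, hence equal to `x y`. Thus `y` lies on `[p_u, p_v]` and is fixed by `g`.
-/

namespace SimpleGraph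

variable {W : Type*} {Y : SimpleGraph W}

theorem IsAcyclic.apply_eq_of_mem_support (hY : Y.IsAcyclic) (φ : Y ≃g Y) {u v : W}
    {p : Y.Walk u v} (hp : p.IsPath) (hu : φ u = u) (hv : φ v = v) :
    ∀ z ∈ p.support, φ z = z := by
  have hmap : ((p.map φ.toHom).copy hu hv).IsPath := by
    rw [Walk.isPath_copy]
    exact hp.map φ.injective
  have heq : (p.map φ.toHom).copy hu hv = p :=
    congrArg Subtype.val ((hY.subsingleton_path u v).elim ⟨_, hmap⟩ ⟨p, hp⟩)
  have hsupp : p.support.map φ = p.support.map id := by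
    simpa [Walk.support_copy, Walk.support_map] using congrArg Walk.support heq
  exact List.map_inj_left.mp hsupp

theorem IsAcyclic.mem_edges_of_adj (hY : Y.IsAcyclic) {u v : W} (huv : Y.Adj u v)
    (p : Y.Walk u v) : s(u, v) ∈ p.edges :=
  isBridge_iff_forall_walk_mem_edges.mp (isAcyclic_iff_forall_adj_isBridge.mp hY huv) p

theorem IsAcyclic.mem_edges_of_notMem_support (hY : Y.IsAcyclic) {v w ξ₁ ξ₂ : W}
    (hvw : Y.Adj v w) (P₁ : Y.Walk v ξ₁) (h₁ : w ∉ P₁.support) (P₂ : Y.Walk w ξ₂)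
    (h₂ : v ∉ P₂.support) (Q : Y.Walk ξ₁ ξ₂) : s(v, w) ∈ Q.edges := by
  have h := hY.mem_edges_of_adj hvw (P₁.append (Q.append P₂.reverse))
  simp only [Walk.edges_append, List.mem_append, Walk.edges_reverse, List.mem_reverse] at h
  rcases h with h | h | h
  · exact absurd (P₁.snd_mem_support_of_mem_edges h) h₁
  · exact h
  · exact absurd (P₂.fst_mem_support_of_mem_edges h) h₂

theorem Connected.eq_or_adj_of_subsingleton_neighborSet (hY : Y.Connected)
    (h : ∀ v, (Y.neighborSet v).Subsingleton) (u v : W) : u = v ∨ Y.Adj u v := by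
  obtain ⟨p, hp⟩ := hY.exists_isPath u v
  cases p with
  | nil => exact Or.inl rfl
  | @cons _ w _ huw q =>
    cases q with
    | nil => exact Or.inr huw
    | @cons _ z _ hwz r =>
      have hne : u ≠ z := by
        rintro rfl
        exact ((Walk.cons_isPath_iff _ _).mp hp).2 (by simp)
      exact (hne (h w huw.symm hwz)).elim

theorem Iso.neighborSet_subsingleton_iff (φ : Y ≃g Y) (v : W) :
    (Y.neighborSet (φ v)).Subsingleton ↔ (Y.neighborSet v).Subsingleton := by
  rw [← Set.subsingleton_coe, ← Set.subsingleton_coe]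
  exact (φ.mapNeighborSet v).subsingleton_congr.symm

theorem IsTree.exists_fixed_or_inverted_of_finite [Finite W] (hY : Y.IsTree) (φ : Y ≃g Y) :
    (∃ z, φ z = z) ∨ ∃ z z', Y.Adj z z' ∧ φ z = z' ∧ φ z' = z := by
  induction hn : Nat.card W using Nat.strong_induction_on generalizing W with
  | _ n ih =>
  by_cases hleaves : ∀ v, (Y.neighborSet v).Subsingleton
  · obtain ⟨z⟩ := hY.nonempty
    rcases hY.connected.eq_or_adj_of_subsingleton_neighborSet hleaves z (φ z) with h | h
    · exact Or.inl ⟨z, h.symm⟩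
    · exact Or.inr ⟨z, φ z, h, rfl, hleaves (φ z) (φ.map_adj_iff.mpr h) h.symm⟩
  -- Strip the leaves: what remains is a smaller `φ`-invariant tree.
  simp only [not_forall] at hleaves
  obtain ⟨v₀, hv₀⟩ := hleaves
  set s : Set W := {v | ¬(Y.neighborSet v).Subsingleton}
  have : Nontrivial W := by
    obtain ⟨a, -, b, -, hab⟩ := Set.not_subsingleton_iff.mp hv₀
    exact ⟨a, b, hab⟩
  have : Fintype W := Fintype.ofFinite W
  classical
  obtain ⟨l, hl⟩ := hY.exists_vert_degree_one_of_nontrivial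
  have hls : l ∉ s := fun hls => hls fun a ha b hb =>
    (degree_eq_one_iff_existsUnique_adj.mp hl).unique ha hb
  have hcard : Nat.card s < n := hn ▸ Finite.card_subtype_lt hls
  have htree : (Y.induce s).IsTree := by
    refine ⟨(connected_iff _).mpr ⟨?_, ⟨⟨v₀, hv₀⟩⟩⟩, hY.isAcyclic.induce s⟩
    exact hY.connected.preconnected.induce_of_degree_eq_one fun v hv => not_not.mp hv
  have hmaps : Set.MapsTo φ s s := fun v hv => by
    simpa only [s, Set.mem_ofPred_eq, φ.neighborSet_subsingleton_iff] using hv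
  have hbij : Set.BijOn φ s s :=
    ((Set.toFinite s).injOn_iff_bijOn_of_mapsTo hmaps).mp φ.injective.injOn
  rcases ih _ hcard htree (φ.induce hbij) rfl with ⟨z, hz⟩ | ⟨z, z', hzz', h₁, h₂⟩
  · exact Or.inl ⟨z, congrArg Subtype.val hz⟩
  · exact Or.inr ⟨z, z', hzz', congrArg Subtype.val h₁, congrArg Subtype.val h₂⟩

def pathHull (Y : SimpleGraph W) (O : Set W) : Set W :=
  ⋃ u ∈ O, ⋃ v ∈ O, ⋃ p : Y.Path u v, {w | w ∈ (p : Y.Walk u v).support}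

theorem subset_pathHull (O : Set W) : O ⊆ Y.pathHull O := fun u hu => by
  simp only [pathHull, Set.mem_iUnion]
  exact ⟨u, hu, u, hu, Path.nil, by simp⟩

theorem IsAcyclic.finite_pathHull (hY : Y.IsAcyclic) {O : Set W} (hO : O.Finite) :
    (Y.pathHull O).Finite :=
  hO.biUnion fun u _ => hO.biUnion fun v _ =>
    have := hY.subsingleton_path u v
    Set.finite_iUnion fun p => (p : Y.Walk u v).support.finite_toSet

theorem mapsTo_pathHull (φ : Y ≃g Y) {O : Set W} (hO : Set.MapsTo φ O O) :
    Set.MapsTo φ (Y.pathHull O) (Y.pathHull O) := fun w hw => by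
  simp only [pathHull, Set.mem_iUnion, Set.mem_ofPred_eq] at hw ⊢
  obtain ⟨u, hu, v, hv, p, hwp⟩ := hw
  refine ⟨φ u, hO hu, φ v, hO hv, p.map φ.toHom φ.injective, ?_⟩
  simpa [Path.map, Walk.support_map] using List.mem_map_of_mem (f := φ) hwp

theorem IsTree.isTree_induce_pathHull (hY : Y.IsTree) {O : Set W} {x : W} (hx : x ∈ O) :
    (Y.induce (Y.pathHull O)).IsTree := by
  classical
  refine ⟨(connected_iff_exists_forall_reachable _).mpr
    ⟨⟨x, subset_pathHull O hx⟩, ?_⟩, hY.isAcyclic.induce _⟩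
  rintro ⟨w, hw⟩
  have hw' := hw
  simp only [pathHull, Set.mem_iUnion, Set.mem_ofPred_eq] at hw'
  obtain ⟨u, hu, v, hv, p, hwp⟩ := hw'
  obtain ⟨q, hq, -⟩ := hY.existsUnique_path x u
  have hr : ∀ z ∈ (q.append ((p : Y.Walk u v).takeUntil w hwp)).support, z ∈ Y.pathHull O := by
    intro z hz
    simp only [pathHull, Set.mem_iUnion, Set.mem_ofPred_eq]
    rcases (Walk.mem_support_append_iff _ _).mp hz with hz | hz
    · exact ⟨x, hx, u, hu, ⟨q, hq⟩, hz⟩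
    · exact ⟨u, hu, v, hv, p, Walk.support_takeUntil_subset_support _ _ hz⟩
  exact ⟨(q.append _).induce _ hr⟩

theorem IsTree.exists_fixed_or_inverted_of_mapsTo (hY : Y.IsTree) (φ : Y ≃g Y) {O : Set W}
    (hO : O.Finite) (hne : O.Nonempty) (hφO : Set.MapsTo φ O O) :
    (∃ z, φ z = z) ∨ ∃ z z', Y.Adj z z' ∧ φ z = z' ∧ φ z' = z := by
  obtain ⟨x, hx⟩ := hne
  have hfin := hY.isAcyclic.finite_pathHull hO
  have : Finite (Y.pathHull O) := hfin
  have hbij : Set.BijOn φ (Y.pathHull O) (Y.pathHull O) :=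
    (hfin.injOn_iff_bijOn_of_mapsTo (mapsTo_pathHull φ hφO)).mp φ.injective.injOn
  rcases (hY.isTree_induce_pathHull hx).exists_fixed_or_inverted_of_finite (φ.induce hbij) with
    ⟨z, hz⟩ | ⟨z, z', hzz', h₁, h₂⟩
  · exact Or.inl ⟨z, congrArg Subtype.val hz⟩
  · exact Or.inr ⟨z, z', hzz', congrArg Subtype.val h₁, congrArg Subtype.val h₂⟩

open MulAction in
theorem IsTree.exists_fixed_of_zpow_fixed (hY : Y.IsTree) (π : Equiv.Perm W)
    (hπ : ∀ u v, Y.Adj (π u) (π v) ↔ Y.Adj u v)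
    (hinv : ∀ u v, Y.Adj u v → ¬(π u = v ∧ π v = u)) {j : ℤ} (hj : j ≠ 0) {x : W}
    (hx : (π ^ j) x = x) : ∃ p, π p = p := by
  let φ : Y ≃g Y := ⟨π, hπ _ _⟩
  have : NeZero (Function.minimalPeriod (π • ·) x) := ⟨fun h0 => hj <| by
    have hdvd := zpow_smul_eq_iff_minimalPeriod_dvd.mp (show (π ^ j) • x = x from hx)
    rwa [h0, Nat.cast_zero, zero_dvd_iff] at hdvd⟩
  have : Finite (orbit (Subgroup.zpowers π) x) := .of_equiv _ (orbitZPowersEquiv π x).symm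
  have hφO : Set.MapsTo φ (orbit (Subgroup.zpowers π) x) (orbit (Subgroup.zpowers π) x) :=
    fun o ho => by
      rw [← orbit_eq_iff.mpr ho]
      exact mem_orbit o (⟨π, Subgroup.mem_zpowers π⟩ : Subgroup.zpowers π)
  rcases hY.exists_fixed_or_inverted_of_mapsTo φ (Set.toFinite _) ⟨x, mem_orbit_self x⟩ hφO with
    ⟨z, hz⟩ | ⟨z, z', hzz', h₁, h₂⟩
  · exact ⟨z, hz⟩
  · exact (hinv z z' hzz' ⟨h₁, h₂⟩).elim

end SimpleGraph

section GTree

variable {G V W : Type} [Group G] {X : SimpleGraph V} {ρ : G →* Equiv.Perm V}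
  {T : SimpleGraph W} {σ : G →* Equiv.Perm W}

theorem mem_vStab_iff {g : G} {v : V} : g ∈ vStab ρ v ↔ ρ g v = v := Iff.rfl

theorem vStab_le_vStab_apply {f : V → W} (hf : ∀ (g : G) (x : V), f (ρ g x) = σ g (f x))
    (x : V) : vStab ρ x ≤ vStab σ (f x) := fun g hg => by
  rw [mem_vStab_iff] at hg ⊢
  rw [← hf, hg]

theorem PreservesAdj.adj_iff (hX : PreservesAdj X ρ) (g : G) (u v : V) :
    X.Adj (ρ g u) (ρ g v) ↔ X.Adj u v := by
  refine ⟨fun h => ?_, hX g u v⟩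
  simpa [map_inv] using hX g⁻¹ _ _ h

def PreservesAdj.iso (hX : PreservesAdj X ρ) (g : G) : X ≃g X :=
  ⟨ρ g, hX.adj_iff g _ _⟩

theorem NoInversions.mem_eStab_of_sym2_eq (hX : NoInversions X ρ) {u v : V} (huv : X.Adj u v)
    {g : G} (hg : s(ρ g u, ρ g v) = s(u, v)) : g ∈ eStab ρ u v := by
  rcases Sym2.eq_iff.mp hg with ⟨hu, hv⟩ | ⟨hu, hv⟩
  · exact ⟨hu, hv⟩
  · exact (hX g u v huv ⟨hu, hv⟩).elim

theorem IsGTree.eStab_le_vStab_of_mem_support (hX : IsGTree X ρ) {u v : V} {p : X.Walk u v}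
    (hp : p.IsPath) {z : V} (hz : z ∈ p.support) : eStab ρ u v ≤ vStab ρ z :=
  fun _ ⟨hu, hv⟩ => hX.1.isAcyclic.apply_eq_of_mem_support (hX.2.1.iso _) hp hu hv z hz

theorem IsGTree.exists_fixed_of_zpow_fixed (hX : IsGTree X ρ) (g : G) {j : ℤ} (hj : j ≠ 0)
    {x : V} (hx : ρ (g ^ j) x = x) : ∃ p, ρ g p = p :=
  hX.1.exists_fixed_of_zpow_fixed (ρ g) (hX.2.1.adj_iff g) (hX.2.2 g) hj (by rwa [← map_zpow])

theorem IsGTree.exists_le_vStab_of_isCyclic (hX : IsGTree X ρ) {A : Subgroup G} [IsCyclic A]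
    {g : G} (hgA : g ∈ A) (hg : g ≠ 1) {x : V} (hx : ρ g x = x) : ∃ p, A ≤ vStab ρ p := by
  obtain ⟨ζ, rfl⟩ := (A.isCyclic_iff_exists_zpowers_eq_top).mp ‹_›
  obtain ⟨j, rfl⟩ := Subgroup.mem_zpowers_iff.mp hgA
  obtain ⟨p, hp⟩ := hX.exists_fixed_of_zpow_fixed ζ (fun hj => hg (by simp [hj])) hx
  exact ⟨p, Subgroup.zpowers_le.mpr hp⟩

theorem IsGTree.mem_edges_of_le_vStab (hX : IsGTree X ρ) {v w ξ₁ ξ₂ : V} (hvw : X.Adj v w)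
    {A B : Subgroup G} (hAv : A ≤ vStab ρ v) (hBw : B ≤ vStab ρ w) (hAw : ¬A ≤ vStab ρ w)
    (hBv : ¬B ≤ vStab ρ v) (hAξ : A ≤ vStab ρ ξ₁) (hBξ : B ≤ vStab ρ ξ₂) (Q : X.Walk ξ₁ ξ₂) :
    s(v, w) ∈ Q.edges := by
  obtain ⟨P₁, hP₁, -⟩ := hX.1.existsUnique_path v ξ₁
  obtain ⟨P₂, hP₂, -⟩ := hX.1.existsUnique_path w ξ₂
  refine hX.1.isAcyclic.mem_edges_of_notMem_support hvw P₁ (fun hw => hAw ?_) P₂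
    (fun hv => hBv ?_) Q
  · exact (le_inf hAv hAξ).trans (hX.eStab_le_vStab_of_mem_support hP₁ hw)
  · exact (le_inf hBw hBξ).trans (hX.eStab_le_vStab_of_mem_support hP₂ hv)

theorem OneEdgeOrbit.exists_sym2_eq (hT : OneEdgeOrbit T σ) {x y z w : W} (hxy : T.Adj x y)
    (hzw : T.Adj z w) : ∃ k : G, s(σ k x, σ k y) = s(z, w) := by
  obtain ⟨u, v, -, htrans⟩ := hT
  have hrep : ∀ {x y : W}, T.Adj x y → ∃ k : G, s(σ k u, σ k v) = s(x, y) := fun hxy => by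
    obtain ⟨k, ⟨h₁, h₂⟩ | ⟨h₁, h₂⟩⟩ := htrans _ _ hxy
    · exact ⟨k, by rw [h₁, h₂]⟩
    · exact ⟨k, by rw [h₁, h₂, Sym2.eq_swap]⟩
  obtain ⟨k₁, hk₁⟩ := hrep hxy
  obtain ⟨k₂, hk₂⟩ := hrep hzw
  refine ⟨k₂ * k₁⁻¹, ?_⟩
  rw [← hk₂, ← Sym2.map_mk, ← hk₁, Sym2.map_mk]
  simp [map_mul, map_inv]

end GTree

section Fold

variable {G V W W' : Type} [Group G] {X : SimpleGraph V} {ρ : G →* Equiv.Perm V}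
  {T : SimpleGraph W} {σ : G →* Equiv.Perm W} {T' : SimpleGraph W'} {σ' : G →* Equiv.Perm W'}
  {a b : V} {q : V → W} {f : W' → W}

theorem IsCollapseMap.exists_adj_of_adj (hq : IsCollapseMap X ρ a b T σ q)
    (hX : PreservesAdj X ρ) (hab : X.Adj a b) {u' v' : W} (h : T.Adj u' v') :
    ∃ u v, X.Adj u v ∧ s(u, v) ∈ EdgeOrbit ρ a b ∧ q u = u' ∧ q v = v' := by
  obtain ⟨k, ⟨hu, hv⟩ | ⟨hu, hv⟩⟩ := hq.2.2.2.2 u' v' h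
  · exact ⟨ρ k a, ρ k b, hX k a b hab, ⟨k, rfl⟩, by rw [hq.1, hu], by rw [hq.1, hv]⟩
  · exact ⟨ρ k b, ρ k a, hX k b a hab.symm, ⟨k, Sym2.eq_swap⟩, by rw [hq.1, hv],
      by rw [hq.1, hu]⟩

theorem IsCollapseMap.eStab_le (hq : IsCollapseMap X ρ a b T σ q) (hX : IsGTree X ρ) {u v : V}
    (huv : X.Adj u v) (he : s(u, v) ∈ EdgeOrbit ρ a b) :
    eStab σ (q u) (q v) ≤ eStab ρ u v := by
  rintro k ⟨hku, hkv⟩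
  obtain ⟨W₁, hW₁⟩ := (hq.2.2.2.1 _ _).mp ((hq.1 k u).trans hku)
  obtain ⟨W₂, hW₂⟩ := (hq.2.2.2.1 _ _).mp ((hq.1 k v).trans hkv)
  -- The bridge `{u, v}` lies in the orbit of `{a, b}`, which `W₁` and `W₂` avoid.
  have h := hX.1.isAcyclic.mem_edges_of_adj huv
    (W₁.reverse.append (.cons (hX.2.1 k u v huv) W₂))
  simp only [Walk.edges_append, Walk.edges_reverse, Walk.edges_cons, List.mem_append,
    List.mem_reverse, List.mem_cons] at h
  rcases h with h | h | h
  · exact absurd he (hW₁ _ h)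
  · exact hX.2.2.mem_eStab_of_sym2_eq huv h.symm
  · exact absurd he (hW₂ _ h)

theorem NontrivialFoldOnto.exists_fix_move (hfold : NontrivialFoldOnto T' σ' T σ f)
    (hT : NoInversions T σ) (horb : OneEdgeOrbit T' σ') :
    ∃ (x y : W') (g : G), T'.Adj x y ∧ g ∈ eStab σ (f x) (f y) ∧ σ' g x = x ∧ σ' g y ≠ y := by
  obtain ⟨hf, -, hfadj, x, y, y', hxy, hxy', hyy', hfy⟩ := hfold
  obtain ⟨g, hg⟩ := horb.exists_sym2_eq hxy hxy'
  have hgT : g ∈ eStab σ (f x) (f y) := hT.mem_eStab_of_sym2_eq (hfadj x y hxy) (by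
    rw [← hf, ← hf, ← Sym2.map_mk, hg, Sym2.map_mk, hfy])
  refine ⟨x, y, g, hxy, hgT, ?_⟩
  rcases Sym2.eq_iff.mp hg with ⟨hgx, hgy⟩ | ⟨hgx, -⟩
  · exact ⟨hgx, fun h => hyy' (h.symm.trans hgy)⟩
  · refine ((hfadj x y hxy).ne ?_).elim
    rw [hfy, ← hgx, hf]
    exact hgT.1.symm

theorem OneEdgeOrbit.sym2_eq_of_map_eq (horb : OneEdgeOrbit T' σ') (hT : NoInversions T σ)
    (hf : ∀ (g : G) (x : W'), f (σ' g x) = σ g (f x)) {x y z w : W'} (hxy : T'.Adj x y)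
    (hzw : T'.Adj z w) (hadj : T.Adj (f x) (f y)) (hfzw : s(f z, f w) = s(f x, f y))
    (hstab : eStab σ (f x) (f y) ≤ eStab σ' z w) : s(x, y) = s(z, w) := by
  obtain ⟨k, hk⟩ := horb.exists_sym2_eq hxy hzw
  have hkT : k ∈ eStab σ (f x) (f y) := hT.mem_eStab_of_sym2_eq hadj (by
    rw [← hf, ← hf, ← Sym2.map_mk, hk, Sym2.map_mk, hfzw])
  obtain ⟨hz, hw⟩ := hstab hkT
  refine Sym2.map.injective (σ' k).injective ?_
  rw [Sym2.map_mk, Sym2.map_mk, hk, mem_vStab_iff.mp hz, mem_vStab_iff.mp hw]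



theorem IsCollapseMap.apply_eq_of_mem_eStab (hq : IsCollapseMap X ρ a b T σ q)
    (hX : IsGTree X ρ) {u v : V} (huv : X.Adj u v) (he : s(u, v) ∈ EdgeOrbit ρ a b)
    [IsCyclic (vStab ρ u)] [IsCyclic (vStab ρ v)]
    (hproper : eStab ρ u v < vStab ρ u ∧ eStab ρ u v < vStab ρ v)
    (hT : IsGTree T σ) (hT' : IsGTree T' σ') (horb : OneEdgeOrbit T' σ')
    (hf : ∀ (g : G) (x : W'), f (σ' g x) = σ g (f x))
    (hfadj : ∀ x y : W', T'.Adj x y → T.Adj (f x) (f y)) {x y : W'} (hxy : T'.Adj x y)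
    (hux : q u = f x) (hvy : q v = f y) {g : G} (hg : g ∈ eStab σ (f x) (f y))
    (hgx : σ' g x = x) : σ' g y = y := by
  have hE : eStab σ (f x) (f y) ≤ eStab ρ u v := hux ▸ hvy ▸ hq.eStab_le hX huv he
  have hAx : vStab ρ u ≤ vStab σ (f x) := hux ▸ vStab_le_vStab_apply hq.1 u
  have hBy : vStab ρ v ≤ vStab σ (f y) := hvy ▸ vStab_le_vStab_apply hq.1 v
  by_contra hgy
  have hg1 : g ≠ 1 := fun h => hgy (by simp [h])
  -- `G_u` and `G_v` are cyclic and contain `g`, which is elliptic in `T'`.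
  obtain ⟨pa, hpa⟩ := hT'.exists_le_vStab_of_isCyclic (hE hg).1 hg1 hgx
  obtain ⟨pb, hpb⟩ := hT'.exists_le_vStab_of_isCyclic (hE hg).2 hg1 hgx
  obtain ⟨Q, hQ, -⟩ := hT'.1.existsUnique_path pa pb
  have hQfix : ∀ z ∈ Q.support, eStab σ (f x) (f y) ≤ vStab σ' z := fun z hz =>
    hE.trans ((inf_le_inf hpa hpb).trans (hT'.eStab_le_vStab_of_mem_support hQ hz))
  have hcross := hT.mem_edges_of_le_vStab (hfadj x y hxy) hAx hBy
    (fun h => hproper.1.not_ge ((le_inf hAx h).trans hE))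
    (fun h => hproper.2.not_ge ((le_inf h hBy).trans hE))
    (hpa.trans (vStab_le_vStab_apply hf pa)) (hpb.trans (vStab_le_vStab_apply hf pb))
    (Q.map ⟨f, hfadj _ _⟩)
  rw [Walk.edges_map, List.mem_map] at hcross
  obtain ⟨e, heQ, hef⟩ := hcross
  induction e using Sym2.ind with | _ z w =>
  have hz := Q.fst_mem_support_of_mem_edges heQ
  have hw := Q.snd_mem_support_of_mem_edges heQ
  have hxyzw := horb.sym2_eq_of_map_eq hT.2.2 hf hxy (Q.adj_of_mem_edges heQ) (hfadj x y hxy)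
    hef (le_inf (hQfix z hz) (hQfix w hw))
  have hy : y ∈ Q.support := by
    rcases Sym2.mem_iff.mp (hxyzw ▸ Sym2.mem_mk_right x y) with rfl | rfl
    exacts [hz, hw]
  exact hgy (hQfix y hy hg)

end Fold

theorem gbs_unfolded_general {G V : Type} [Group G]
    (X : SimpleGraph V) (ρ : G →* Equiv.Perm V) (hX : IsGBSTree X ρ)
    (hproper : ∀ u v : V, X.Adj u v → eStab ρ u v < vStab ρ u ∧ eStab ρ u v < vStab ρ v) :
    ∀ a b : V, X.Adj a b →
      ∀ (W : Type) (T : SimpleGraph W) (σ : G →* Equiv.Perm W) (q : V → W),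
        IsGTree T σ → IsCollapseMap X ρ a b T σ q →
        ∀ (W' : Type) (T' : SimpleGraph W') (σ' : G →* Equiv.Perm W') (f : W' → W),
          IsGTree T' σ' → OneEdgeOrbit T' σ' →
          ¬ NontrivialFoldOnto T' σ' T σ f := by
  intro a b hab W T σ q hT hq W' T' σ' f hT' horb hfold
  obtain ⟨x, y, g, hxy, hg, hgx, hgy⟩ := hfold.exists_fix_move hT.2.2 horb
  obtain ⟨u, v, huv, he, hux, hvy⟩ := hq.exists_adj_of_adj hX.1.2.1 hab (hfold.2.2.1 x y hxy)
  have := (hX.2.1 u).1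
  have := (hX.2.1 v).1
  exact hgy (hq.apply_eq_of_mem_eStab hX.1 huv he (hproper u v huv) hT hT' horb hfold.1
    hfold.2.2.1 hxy hux hvy hg hgx)

/-- A cocompact generalized Baumslag–Solitar tree in which
every edge stabilizer is a proper subgroup of both neighboring vertex
stabilizers is unfolded: for every edge `{a, b}`, the one-edge splitting
obtained by collapsing the components of `X − G⬝{a,b}` admits no nontrivial
fold onto it. -/
theorem gbs_unfolded {G V : Type} [Group G]
    (X : SimpleGraph V) (ρ : G →* Equiv.Perm V) (hX : IsGBSTree X ρ)
    (hcocpt : Finite (Quot fun x y : V => ∃ g : G, ρ g x = y))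
    (hproper : ∀ u v : V, X.Adj u v → eStab ρ u v < vStab ρ u ∧ eStab ρ u v < vStab ρ v) :
    ∀ a b : V, X.Adj a b →
      ∀ (W : Type) (T : SimpleGraph W) (σ : G →* Equiv.Perm W) (q : V → W),
        IsGTree T σ → IsCollapseMap X ρ a b T σ q →
        ∀ (W' : Type) (T' : SimpleGraph W') (σ' : G →* Equiv.Perm W') (f : W' → W),
          IsGTree T' σ' → OneEdgeOrbit T' σ' →
          ¬ NontrivialFoldOnto T' σ' T σ f :=
  gbs_unfolded_general X ρ hX hproper
end

section
/- Fix nonzero integers m, n, r, s. Let G₁ be the fundamental group of the graph of groups with two vertices u, v with groups ℤ, an edge from u to v with edge group ℤ included by multiplication by rm² into G_u and by s into G_v, and a loop at u with edge group ℤ included by multiplication by mnr and by r into G_u. Let G₂ be defined symmetrically: two vertices with groups ℤ, an edge with inclusions r into G_u and sn² into G_v, and a loop at v with inclusions s and mns into G_v. Then G₁ ≅ G₂. -/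
/-!
On presentations, the elementary deformation of Bass–Serre trees is the substitution
`a ↦ t²at⁻²` fixing `b` and `t`. In `G₂` conjugation by `t` sends `b^(mns·k)` to `b^(s·k)`,
and `a^r` is a power of `b^s`, so the relations of `G₂` give those of `G₁` for
`(t²at⁻², b, t)`. Symmetrically, in `G₁` conjugation by `t⁻¹` sends `a^(r·k)` to `a^(mnr·k)`,
so the relations of `G₁` give those of `G₂` for `(t⁻²at², b, t)`. The two substitutions are
mutually inverse on generators.
-/

theorem PresentedGroup.lift_of_eq_mk {α : Type*} (rels : Set (FreeGroup α)) :
    FreeGroup.lift PresentedGroup.of = PresentedGroup.mk rels :=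
  FreeGroup.ext_hom _ _ fun _ => rfl

theorem PresentedGroup.lift_of_eq_one_of_mem {α : Type*} {rels : Set (FreeGroup α)}
    {w : FreeGroup α} (hw : w ∈ rels) : FreeGroup.lift (PresentedGroup.of (rels := rels)) w = 1 := by
  rw [PresentedGroup.lift_of_eq_mk]
  exact PresentedGroup.one_of_mem hw

theorem MulAut.conj_zpow_mul_eq {G : Type*} [Group G] {t x : G} {k l : ℤ}
    (h : MulAut.conj t (x ^ k) = x ^ l) (j : ℤ) : MulAut.conj t (x ^ (k * j)) = x ^ (l * j) := by
  rw [zpow_mul, map_zpow, h, ← zpow_mul]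

namespace GBS

variable {G : Type*} [Group G] {m n r s : ℤ}

def rels₁ (m n r s : ℤ) : Set (FreeGroup (Fin 3)) :=
  {FreeGroup.of 2 * FreeGroup.of 0 ^ (m * n * r) * (FreeGroup.of 2)⁻¹ * (FreeGroup.of 0 ^ r)⁻¹,
    FreeGroup.of 0 ^ (r * m ^ 2) * (FreeGroup.of 1 ^ s)⁻¹}

def rels₂ (m n r s : ℤ) : Set (FreeGroup (Fin 3)) :=
  {FreeGroup.of 2 * FreeGroup.of 1 ^ (m * n * s) * (FreeGroup.of 2)⁻¹ * (FreeGroup.of 1 ^ s)⁻¹,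
    FreeGroup.of 0 ^ r * (FreeGroup.of 1 ^ (s * n ^ 2))⁻¹}

def Rel₁ (m n r s : ℤ) (a b t : G) : Prop :=
  MulAut.conj t (a ^ (m * n * r)) = a ^ r ∧ a ^ (r * m ^ 2) = b ^ s

def Rel₂ (m n r s : ℤ) (a b t : G) : Prop :=
  MulAut.conj t (b ^ (m * n * s)) = b ^ s ∧ a ^ r = b ^ (s * n ^ 2)

theorem lift_rels₁_eq_one_iff {f : Fin 3 → G} :
    (∀ w ∈ rels₁ m n r s, FreeGroup.lift f w = 1) ↔ Rel₁ m n r s (f 0) (f 1) (f 2) := by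
  simp [rels₁, Rel₁, mul_inv_eq_one]

theorem lift_rels₂_eq_one_iff {f : Fin 3 → G} :
    (∀ w ∈ rels₂ m n r s, FreeGroup.lift f w = 1) ↔ Rel₂ m n r s (f 0) (f 1) (f 2) := by
  simp [rels₂, Rel₂, mul_inv_eq_one]

theorem rel₁_of : Rel₁ m n r s (.of 0 : PresentedGroup (rels₁ m n r s)) (.of 1) (.of 2) :=
  lift_rels₁_eq_one_iff.mp fun _ => PresentedGroup.lift_of_eq_one_of_mem

theorem rel₂_of : Rel₂ m n r s (.of 0 : PresentedGroup (rels₂ m n r s)) (.of 1) (.of 2) :=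
  lift_rels₂_eq_one_iff.mp fun _ => PresentedGroup.lift_of_eq_one_of_mem

theorem Rel₂.rel₁_conj_sq {a b t : G} (h : Rel₂ m n r s a b t) :
    Rel₁ m n r s (MulAut.conj t (MulAut.conj t a)) b t := by
  obtain ⟨hb, ha⟩ := h
  have hb' := MulAut.conj_zpow_mul_eq hb
  constructor
  · have hmnr : a ^ (m * n * r) = b ^ (m * n * s * n ^ 2) := by
      rw [show m * n * r = r * (m * n) by ring, zpow_mul, ha, ← zpow_mul]; ring_nf
    simp only [← map_zpow, hmnr, hb', ha]
  · have hrm : a ^ (r * m ^ 2) = b ^ (m * n * s * (m * n)) := by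
      rw [zpow_mul, ha, ← zpow_mul]; ring_nf
    rw [← map_zpow, ← map_zpow, hrm, hb', show s * (m * n) = m * n * s * 1 by ring, hb', mul_one]

theorem Rel₁.rel₂_conj_inv_sq {a b t : G} (h : Rel₁ m n r s a b t) :
    Rel₂ m n r s (MulAut.conj t⁻¹ (MulAut.conj t⁻¹ a)) b t := by
  obtain ⟨ha, hab⟩ := h
  have ha' (j : ℤ) : MulAut.conj t⁻¹ (a ^ (r * j)) = a ^ (m * n * r * j) := by
    rw [← MulAut.conj_zpow_mul_eq ha j]
    simp [mul_assoc]
  constructor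
  · have hmns : b ^ (m * n * s) = a ^ (m * n * r * m ^ 2) := by
      rw [show m * n * s = s * (m * n) by ring, zpow_mul, ← hab, ← zpow_mul]; ring_nf
    rw [hmns, MulAut.conj_zpow_mul_eq ha, hab]
  · have hmnr : a ^ (m * n * r * (m * n)) = b ^ (s * n ^ 2) := by
      rw [show m * n * r * (m * n) = r * m ^ 2 * n ^ 2 by ring, zpow_mul, hab, ← zpow_mul]
    rw [← map_zpow, ← map_zpow, ← mul_one r, ha', show m * n * r * 1 = r * (m * n) by ring, ha',
      hmnr]

def hom₁₂ (m n r s : ℤ) : PresentedGroup (rels₁ m n r s) →* PresentedGroup (rels₂ m n r s) :=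
  let t : PresentedGroup (rels₂ m n r s) := .of 2
  PresentedGroup.toGroup (f := ![MulAut.conj t (MulAut.conj t (.of 0)), .of 1, t])
    (lift_rels₁_eq_one_iff.mpr rel₂_of.rel₁_conj_sq)

def hom₂₁ (m n r s : ℤ) : PresentedGroup (rels₂ m n r s) →* PresentedGroup (rels₁ m n r s) :=
  let t : PresentedGroup (rels₁ m n r s) := .of 2
  PresentedGroup.toGroup (f := ![MulAut.conj t⁻¹ (MulAut.conj t⁻¹ (.of 0)), .of 1, t])
    (lift_rels₂_eq_one_iff.mpr rel₁_of.rel₂_conj_inv_sq)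

def presentedGroupEquiv (m n r s : ℤ) :
    PresentedGroup (rels₁ m n r s) ≃* PresentedGroup (rels₂ m n r s) :=
  MonoidHom.toMulEquiv (hom₁₂ m n r s) (hom₂₁ m n r s)
    (PresentedGroup.ext fun i => by fin_cases i <;> simp [hom₁₂, hom₂₁, mul_assoc])
    (PresentedGroup.ext fun i => by fin_cases i <;> simp [hom₁₂, hom₂₁, mul_assoc])

end GBS

theorem gbs_example_iso_general (m n r s : ℤ) :
    Nonempty
      ((PresentedGroup
          ({FreeGroup.of 2 * FreeGroup.of 0 ^ (m * n * r) * (FreeGroup.of 2)⁻¹ *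
              (FreeGroup.of 0 ^ r)⁻¹,
            FreeGroup.of 0 ^ (r * m ^ 2) * (FreeGroup.of 1 ^ s)⁻¹} :
            Set (FreeGroup (Fin 3)))) ≃*
        (PresentedGroup
          ({FreeGroup.of 2 * FreeGroup.of 1 ^ (m * n * s) * (FreeGroup.of 2)⁻¹ *
              (FreeGroup.of 1 ^ s)⁻¹,
            FreeGroup.of 0 ^ r * (FreeGroup.of 1 ^ (s * n ^ 2))⁻¹} :
            Set (FreeGroup (Fin 3))))) :=
  ⟨GBS.presentedGroupEquiv m n r s⟩

/-- For nonzero integers `m, n, r, s`, the groups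
`G₁ = ⟨a, b, t | t a^{mnr} t⁻¹ = a^r, a^{rm²} = b^s⟩` and
`G₂ = ⟨a, b, t | t b^{mns} t⁻¹ = b^s, a^r = b^{sn²}⟩`
(the fundamental groups of the two edge-indexed graphs of `ℤ`'s in the main
example) are isomorphic.  Here `a = of 0`, `b = of 1`, `t = of 2`. -/
theorem gbs_example_iso (m n r s : ℤ) (hm : m ≠ 0) (hn : n ≠ 0) (hr : r ≠ 0) (hs : s ≠ 0) :
    Nonempty
      ((PresentedGroup
          ({FreeGroup.of 2 * FreeGroup.of 0 ^ (m * n * r) * (FreeGroup.of 2)⁻¹ *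
              (FreeGroup.of 0 ^ r)⁻¹,
            FreeGroup.of 0 ^ (r * m ^ 2) * (FreeGroup.of 1 ^ s)⁻¹} :
            Set (FreeGroup (Fin 3)))) ≃*
        (PresentedGroup
          ({FreeGroup.of 2 * FreeGroup.of 1 ^ (m * n * s) * (FreeGroup.of 2)⁻¹ *
              (FreeGroup.of 1 ^ s)⁻¹,
            FreeGroup.of 0 ^ r * (FreeGroup.of 1 ^ (s * n ^ 2))⁻¹} :
            Set (FreeGroup (Fin 3))))) :=
  gbs_example_iso_general m n r s
end
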